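/- arXiv:2602.01458 — 2 statements merged into one kernel-verified Lean document; each statement's English description precedes it below -/
import Mathlib

section
/- In the Samelson setup, let α ∈ Δ⁺ be a positive root and β a negative root (−β ∈ Δ⁺) of the simple ideal 𝔤ᵢ such that α + β ∈ Δ⁺, and set γ := −α − β (a negative root). Then for all X ∈ 𝔤_γ, Y ∈ 𝔤_α, Z ∈ 𝔤_β one has Φ(X, Y, Z) = −λᵢ (c_α − c_{α+β}) B([X,Y], Z). -/
/-!
On `𝔤_γ`, `𝔤_α`, `𝔤_β` the complex structure `J` acts by `-i`, `i`, `-i`, so the three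
`J`-terms of `Φ` equal `g([X,Y],Z)`, `-g([Z,X],Y)`, `g([Y,Z],X)` and
`Φ(X,Y,Z) = g(Y,[Z,X]) - g([Y,Z],X)`. These pair `𝔤_α` with `𝔤_{-α}` and `𝔤_{α+β}` with
`𝔤_{-(α+β)}`, with `Y, [Y,Z] ∈ 𝔤ᵢ`, hence equal `-λᵢ c_α B(Y,[Z,X])` and
`-λᵢ c_{α+β} B([Y,Z],X)`; invariance of the Killing form identifies both Killing values
with `B([X,Y],Z)`.
-/

/-- The Samelson setup: a finite-dimensional complex semisimple Lie algebra `L` with a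
Cartan subalgebra `H`, root system `Δ` (with values in an additive group `R` of weights),
a choice of positive roots `pos` with simple roots, root spaces, the decomposition into
simple ideals, the left-invariant metric `G` determined by constants `lam i > 0` and
`c α > 0`, a Samelson complex structure `J`, and the Killing form `killingForm ℂ L`. -/
structure SamelsonSetup (R L : Type) [AddCommGroup R] [LieRing L] [LieAlgebra ℂ L] where
  finiteDim : FiniteDimensional ℂ L
  semisimple : LieAlgebra.IsSemisimple ℂ L
  /-- the Cartan subalgebra 𝔥 -/
  H : LieSubalgebra ℂ L
  cartan : H.IsCartanSubalgebra
  /-- the root system Δ ⊆ 𝔥* -/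
  Δ : Set R
  /-- the positive roots Δ⁺ -/
  pos : Set R
  Δ_finite : Δ.Finite
  pos_subset : pos ⊆ Δ
  zero_not_mem : (0 : R) ∉ Δ
  neg_mem : ∀ a ∈ Δ, -a ∈ Δ
  pos_or_neg : ∀ a ∈ Δ, a ∈ pos ∨ -a ∈ pos
  not_pos_and_neg : ∀ a ∈ pos, -a ∉ pos
  /-- the number of simple roots (= rank) -/
  r : ℕ
  /-- the simple roots α₁, …, α_r -/
  simple : Fin r → R
  simple_mem : ∀ j, simple j ∈ pos
  /-- the coefficients of a positive root as an ℕ-linear combination of simple roots -/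
  coeff : R → Fin r → ℕ
  coeff_spec : ∀ a ∈ pos, a = ∑ j, coeff a j • simple j
  coeff_unique : ∀ a ∈ pos, ∀ k : Fin r → ℕ, a = ∑ j, k j • simple j → k = coeff a
  descent : ∀ a ∈ pos, (∀ j, a ≠ simple j) → ∃ j, ∃ b ∈ pos, a = simple j + b
  /-- the root spaces 𝔤_α (with 𝔤₀ = 𝔥) -/
  rootSpace : R → Submodule ℂ L
  rootSpace_zero : rootSpace 0 = H.toSubmodule
  rootSpace_eq_bot : ∀ a : R, a ≠ 0 → a ∉ Δ → rootSpace a = ⊥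
  bracket_mem : ∀ (a b : R), ∀ X ∈ rootSpace a, ∀ Y ∈ rootSpace b, ⁅X, Y⁆ ∈ rootSpace (a + b)
  rootSpace_sup : (⨆ a ∈ insert (0 : R) Δ, rootSpace a) = ⊤
  rootSpace_indep : iSupIndep fun a : ↥(insert (0 : R) Δ) => rootSpace a.1
  /-- the number of simple ideals -/
  s : ℕ
  /-- the simple ideals 𝔤₁, …, 𝔤_s -/
  ideal : Fin s → LieIdeal ℂ L
  ideal_simple : ∀ i, LieAlgebra.IsSimple ℂ (ideal i)
  ideal_sup : (⨆ i, ideal i) = ⊤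
  ideal_indep : iSupIndep ideal
  /-- the simple ideal a root belongs to -/
  idealOf : R → Fin s
  idealOf_neg : ∀ a, idealOf (-a) = idealOf a
  rootSpace_le_ideal : ∀ a ∈ Δ, ∀ X ∈ rootSpace a, X ∈ ideal (idealOf a)
  /-- the positive constants λᵢ -/
  lam : Fin s → ℝ
  lam_pos : ∀ i, 0 < lam i
  /-- the positive constants c_α, with c_{-α} = c_α -/
  c : R → ℝ
  c_pos : ∀ a ∈ Δ, 0 < c a
  c_neg : ∀ a : R, c (-a) = c a
  /-- the metric g -/
  G : LinearMap.BilinForm ℂ L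
  G_symm : ∀ X Y, G X Y = G Y X
  G_H : ∀ i : Fin s, ∀ X Y : L, X ∈ H → X ∈ ideal i → Y ∈ H → Y ∈ ideal i →
    G X Y = -(lam i : ℂ) * killingForm ℂ L X Y
  G_root : ∀ a ∈ Δ, ∀ X ∈ rootSpace a, ∀ Y ∈ rootSpace (-a),
    G X Y = -(lam (idealOf a) : ℂ) * (c a : ℂ) * killingForm ℂ L X Y
  G_roots_ne : ∀ a ∈ Δ, ∀ b ∈ Δ, a + b ≠ 0 →
    ∀ X ∈ rootSpace a, ∀ Y ∈ rootSpace b, G X Y = 0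
  G_H_root : ∀ a ∈ Δ, ∀ X ∈ H, ∀ Y ∈ rootSpace a, G X Y = 0
  G_ideal_ne : ∀ i j : Fin s, i ≠ j → ∀ X ∈ ideal i, ∀ Y ∈ ideal j, G X Y = 0
  /-- the Samelson complex structure J -/
  J : L →ₗ[ℂ] L
  J_H : ∀ X ∈ H, J X ∈ H
  J_J_H : ∀ X ∈ H, J (J X) = -X
  J_pos : ∀ a ∈ pos, ∀ X ∈ rootSpace a, J X = Complex.I • X
  J_neg : ∀ a ∈ pos, ∀ X ∈ rootSpace (-a), J X = -(Complex.I • X)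

namespace SamelsonSetup

variable {R L : Type} [AddCommGroup R] [LieRing L] [LieAlgebra ℂ L]

/-- The Nomizu form of the Bismut connection:
Φ(X,Y,Z) = ½( g([X,Y],Z) + g([Z,X],Y) − g([Y,Z],X)
            − g([JX,JY],Z) − g([JZ,JX],Y) − g([JY,JZ],X) ). -/
noncomputable def Phi (S : SamelsonSetup R L) (X Y Z : L) : ℂ :=
  (1 / 2 : ℂ) * (S.G ⁅X, Y⁆ Z + S.G ⁅Z, X⁆ Y - S.G ⁅Y, Z⁆ X
    - S.G ⁅S.J X, S.J Y⁆ Z - S.G ⁅S.J Z, S.J X⁆ Y - S.G ⁅S.J Y, S.J Z⁆ X)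

/-- The Bismut torsion: T(X,Y,Z) = −g([JX,JY],Z) − g([JY,JZ],X) − g([JZ,JX],Y). -/
noncomputable def T (S : SamelsonSetup R L) (X Y Z : L) : ℂ :=
  -S.G ⁅S.J X, S.J Y⁆ Z - S.G ⁅S.J Y, S.J Z⁆ X - S.G ⁅S.J Z, S.J X⁆ Y

end SamelsonSetup

lemma killingForm_lie_apply_cycle {K L : Type*} [CommRing K] [LieRing L] [LieAlgebra K L]
    (x y z : L) : killingForm K L ⁅x, y⁆ z = killingForm K L ⁅y, z⁆ x := by
  rw [LieModule.traceForm_apply_lie_apply, LieModule.traceForm_comm]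

namespace SamelsonSetup

variable {R L : Type} [AddCommGroup R] [LieRing L] [LieAlgebra ℂ L] (S : SamelsonSetup R L)

lemma lie_mem_rootSpace {a b c : R} {X Y : L} (hX : X ∈ S.rootSpace a) (hY : Y ∈ S.rootSpace b)
    (habc : a + b = c) : ⁅X, Y⁆ ∈ S.rootSpace c :=
  habc ▸ S.bracket_mem a b X hX Y hY

lemma eq_zero_of_mem_ideal_of_ne {i j : Fin S.s} (hij : i ≠ j) {W : L} (hi : W ∈ S.ideal i)
    (hj : W ∈ S.ideal j) : W = 0 := by
  simpa using (S.ideal_indep.pairwiseDisjoint hij).le_bot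
    ((LieSubmodule.mem_inf _ _ _).mpr ⟨hi, hj⟩)

lemma G_apply_of_mem_ideal {a : R} (ha : a ∈ S.Δ) {i : Fin S.s} {W V : L}
    (hW : W ∈ S.rootSpace a) (hWi : W ∈ S.ideal i) (hV : V ∈ S.rootSpace (-a)) :
    S.G W V = -(S.lam i : ℂ) * (S.c a : ℂ) * killingForm ℂ L W V := by
  by_cases hai : S.idealOf a = i
  · rw [← hai, S.G_root a ha W hW V hV]
  · rw [S.eq_zero_of_mem_ideal_of_ne hai (S.rootSpace_le_ideal a ha W hW) hWi]
    simp

lemma Phi_eq_of_J_eq {X Y Z : L} (hX : S.J X = -(Complex.I • X)) (hY : S.J Y = Complex.I • Y)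
    (hZ : S.J Z = -(Complex.I • Z)) : S.Phi X Y Z = S.G ⁅Z, X⁆ Y - S.G ⁅Y, Z⁆ X := by
  rw [Phi, hX, hY, hZ]
  simp only [neg_lie, lie_neg, smul_lie, lie_smul, smul_neg, smul_smul, Complex.I_mul_I,
    neg_smul, one_smul, neg_neg, map_neg, LinearMap.neg_apply]
  ring

end SamelsonSetup

theorem nomizu_formula_pos_neg_general {R L : Type} [AddCommGroup R] [LieRing L] [LieAlgebra ℂ L]
    (S : SamelsonSetup R L) (i : Fin S.s) (α β : R) (hα : α ∈ S.pos) (hβ : -β ∈ S.pos)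
    (hαi : S.idealOf α = i) (hαβ : α + β ∈ S.pos)
    (X Y Z : L) (hX : X ∈ S.rootSpace (-(α + β))) (hY : Y ∈ S.rootSpace α)
    (hZ : Z ∈ S.rootSpace β) :
    S.Phi X Y Z
      = -(S.lam i : ℂ) * ((S.c α : ℂ) - (S.c (α + β) : ℂ)) * killingForm ℂ L ⁅X, Y⁆ Z := by
  have hZX : ⁅Z, X⁆ ∈ S.rootSpace (-α) := S.lie_mem_rootSpace hZ hX (by abel)
  have hYZ : ⁅Y, Z⁆ ∈ S.rootSpace (α + β) := S.bracket_mem α β Y hY Z hZ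
  have hYi : Y ∈ S.ideal i := hαi ▸ S.rootSpace_le_ideal α (S.pos_subset hα) Y hY
  have hPhi := S.Phi_eq_of_J_eq (S.J_neg _ hαβ X hX) (S.J_pos α hα Y hY)
    (S.J_neg (-β) hβ Z (by rwa [neg_neg]))
  rw [hPhi, S.G_symm, S.G_apply_of_mem_ideal (S.pos_subset hα) hY hYi hZX,
    S.G_apply_of_mem_ideal (S.pos_subset hαβ) hYZ (lie_mem_left ℂ L _ Y Z hYi) hX,
    killingForm_lie_apply_cycle X Y Z, ← LieModule.traceForm_apply_lie_apply]
  ring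

/-- For a positive root α ∈ Δ⁺ and a negative root β (−β ∈ Δ⁺) of the simple
ideal 𝔤ᵢ with α + β ∈ Δ⁺, setting γ := −α−β, one has
Φ(X, Y, Z) = −λᵢ (c_α − c_{α+β}) B([X,Y], Z) for all X ∈ 𝔤_γ, Y ∈ 𝔤_α, Z ∈ 𝔤_β. -/
theorem nomizu_formula_pos_neg {R L : Type} [AddCommGroup R] [LieRing L] [LieAlgebra ℂ L]
    (S : SamelsonSetup R L) (i : Fin S.s) (α β : R) (hα : α ∈ S.pos) (hβ : -β ∈ S.pos)
    (hαi : S.idealOf α = i) (hβi : S.idealOf β = i) (hαβ : α + β ∈ S.pos)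
    (X Y Z : L) (hX : X ∈ S.rootSpace (-(α + β))) (hY : Y ∈ S.rootSpace α)
    (hZ : Z ∈ S.rootSpace β) :
    S.Phi X Y Z
      = -(S.lam i : ℂ) * ((S.c α : ℂ) - (S.c (α + β) : ℂ)) * killingForm ℂ L ⁅X, Y⁆ Z :=
  nomizu_formula_pos_neg_general S i α β hα hβ hαi hαβ X Y Z hX hY hZ
end

section
/- In the Samelson setup, let X ∈ 𝔤_α, Y ∈ 𝔤_β, Z ∈ 𝔤_γ where α, β, γ ∈ Δ ∪ {0} (with the convention 𝔤₀ := 𝔥) and α + β + γ ≠ 0. Then the Bismut torsion vanishes: T(X, Y, Z) = 0. -/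
/-! `J` preserves every root space and `g` pairs `𝔤_a` with `𝔤_b` only when `a + b = 0`.
Hence each term `g([JX, JY], Z)` of the torsion pairs `𝔤_{α+β}` with `𝔤_γ`, which is zero
as soon as `α + β + γ ≠ 0`; the other two terms are its cyclic permutations. -/

namespace SamelsonSetup

variable {R L : Type} [AddCommGroup R] [LieRing L] [LieAlgebra ℂ L] (S : SamelsonSetup R L)

theorem eq_zero_of_mem_rootSpace_of_not_mem {a : R} (ha : a ∉ insert (0 : R) S.Δ) {X : L}
    (hX : X ∈ S.rootSpace a) : X = 0 := by
  rw [Set.mem_insert_iff, not_or] at ha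
  rwa [S.rootSpace_eq_bot a ha.1 ha.2, Submodule.mem_bot] at hX

theorem J_mem_rootSpace {a : R} {X : L} (hX : X ∈ S.rootSpace a) : S.J X ∈ S.rootSpace a := by
  by_cases ha : a ∈ insert (0 : R) S.Δ
  swap
  · rw [S.eq_zero_of_mem_rootSpace_of_not_mem ha hX, map_zero]
    exact zero_mem _
  rcases ha with rfl | ha
  · rw [S.rootSpace_zero] at hX ⊢
    exact S.J_H X hX
  rcases S.pos_or_neg a ha with hpos | hneg
  · rw [S.J_pos a hpos X hX]
    exact Submodule.smul_mem _ _ hX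
  · rw [S.J_neg (-a) hneg X (by rwa [neg_neg])]
    exact Submodule.neg_mem _ (Submodule.smul_mem _ _ hX)

theorem G_eq_zero_of_add_ne_zero {a b : R} (hab : a + b ≠ 0) {U V : L}
    (hU : U ∈ S.rootSpace a) (hV : V ∈ S.rootSpace b) : S.G U V = 0 := by
  by_cases ha : a ∈ insert (0 : R) S.Δ
  swap
  · simp [S.eq_zero_of_mem_rootSpace_of_not_mem ha hU]
  by_cases hb : b ∈ insert (0 : R) S.Δ
  swap
  · simp [S.eq_zero_of_mem_rootSpace_of_not_mem hb hV]
  rcases ha with rfl | ha <;> rcases hb with rfl | hb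
  · exact absurd (add_zero 0) hab
  · rw [S.rootSpace_zero] at hU
    exact S.G_H_root b hb U hU V hV
  · rw [S.rootSpace_zero] at hV
    rw [S.G_symm]
    exact S.G_H_root a ha V hV U hU
  · exact S.G_roots_ne a ha b hb hab U hU V hV

theorem G_lie_J_J_eq_zero {a b c : R} (habc : a + b + c ≠ 0) {U V W : L}
    (hU : U ∈ S.rootSpace a) (hV : V ∈ S.rootSpace b) (hW : W ∈ S.rootSpace c) :
    S.G ⁅S.J U, S.J V⁆ W = 0 :=
  S.G_eq_zero_of_add_ne_zero habc
    (S.bracket_mem a b _ (S.J_mem_rootSpace hU) _ (S.J_mem_rootSpace hV)) hW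

end SamelsonSetup

theorem bismut_torsion_vanishes_of_sum_ne_zero_general {R L : Type} [AddCommGroup R] [LieRing L]
    [LieAlgebra ℂ L] (S : SamelsonSetup R L) (α β γ : R)
    (hsum : α + β + γ ≠ 0)
    (X Y Z : L) (hX : X ∈ S.rootSpace α) (hY : Y ∈ S.rootSpace β) (hZ : Z ∈ S.rootSpace γ) :
    S.T X Y Z = 0 := by
  have hβγα : β + γ + α ≠ 0 := by rwa [add_rotate] at hsum
  have hγαβ : γ + α + β ≠ 0 := by rwa [← add_rotate] at hsum
  rw [SamelsonSetup.T, S.G_lie_J_J_eq_zero hsum hX hY hZ, S.G_lie_J_J_eq_zero hβγα hY hZ hX,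
    S.G_lie_J_J_eq_zero hγαβ hZ hX hY]
  simp

/-- For X ∈ 𝔤_α, Y ∈ 𝔤_β, Z ∈ 𝔤_γ with α, β, γ ∈ Δ ∪ {0}
(convention 𝔤₀ = 𝔥) and α + β + γ ≠ 0, the Bismut torsion vanishes: T(X,Y,Z) = 0. -/
theorem bismut_torsion_vanishes_of_sum_ne_zero {R L : Type} [AddCommGroup R] [LieRing L]
    [LieAlgebra ℂ L] (S : SamelsonSetup R L) (α β γ : R)
    (hα : α ∈ insert (0 : R) S.Δ) (hβ : β ∈ insert (0 : R) S.Δ)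
    (hγ : γ ∈ insert (0 : R) S.Δ) (hsum : α + β + γ ≠ 0)
    (X Y Z : L) (hX : X ∈ S.rootSpace α) (hY : Y ∈ S.rootSpace β) (hZ : Z ∈ S.rootSpace γ) :
    S.T X Y Z = 0 :=
  bismut_torsion_vanishes_of_sum_ne_zero_general S α β γ hsum X Y Z hX hY hZ
end
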